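/- Let λ be a partition, γ an addable i-node and γ′ a removable i-node of λ with γ ≠ γ′. Then |I_i^{(l)}(λ−γ′, λ)| − |I_i^{(l)}(λ+γ−γ′, λ+γ)| = |R_i^{(r)}(λ, λ+γ)| − |R_i^{(r)}(λ−γ′, λ−γ′+γ)|. -/
import Mathlib


/-- A partition given as a weakly decreasing sequence of row lengths, eventually zero. -/
def IsPartition (f : ℕ → ℕ) : Prop := Antitone f ∧ ∃ N, ∀ m, N ≤ m → f m = 0

/-- The node `p = (a, b)` (row `a`, column `b`, both 0-indexed) is addable (indent) for `f`. -/
def Addable (f : ℕ → ℕ) (p : ℕ × ℕ) : Prop :=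
  p.2 = f p.1 ∧ (p.1 = 0 ∨ p.2 < f (p.1 - 1))

/-- The node `p = (a, b)` is removable for `f`. -/
def Removable (f : ℕ → ℕ) (p : ℕ × ℕ) : Prop :=
  p.2 + 1 = f p.1 ∧ f (p.1 + 1) ≤ p.2

/-- The residue of the node `p = (a, b)` is `b - a (mod n)`. -/
def Res (n : ℕ) (p : ℕ × ℕ) : ZMod n := (p.2 : ZMod n) - (p.1 : ZMod n)

/-- Add a node in row `p.1`. -/
def addNode (f : ℕ → ℕ) (p : ℕ × ℕ) : ℕ → ℕ := Function.update f p.1 (f p.1 + 1)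

/-- Remove a node in row `p.1`. -/
def removeNode (f : ℕ → ℕ) (p : ℕ × ℕ) : ℕ → ℕ := Function.update f p.1 (f p.1 - 1)

/-- `I_i(f)`: the set of addable `i`-nodes of `f`. -/
def AddSet (n : ℕ) (f : ℕ → ℕ) (i : ZMod n) : Set (ℕ × ℕ) :=
  {p | Addable f p ∧ Res n p = i}

/-- `R_i(f)`: the set of removable `i`-nodes of `f`. -/
def RemSet (n : ℕ) (f : ℕ → ℕ) (i : ZMod n) : Set (ℕ × ℕ) :=
  {p | Removable f p ∧ Res n p = i}

/-- Addable `i`-nodes strictly to the left of column `c`. -/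
def AddSetL (n : ℕ) (f : ℕ → ℕ) (i : ZMod n) (c : ℕ) : Set (ℕ × ℕ) :=
  {p | p ∈ AddSet n f i ∧ p.2 < c}

/-- Addable `i`-nodes not to the left of column `c`. -/
def AddSetR (n : ℕ) (f : ℕ → ℕ) (i : ZMod n) (c : ℕ) : Set (ℕ × ℕ) :=
  {p | p ∈ AddSet n f i ∧ c ≤ p.2}

/-- Removable `i`-nodes strictly to the left of column `c`. -/
def RemSetL (n : ℕ) (f : ℕ → ℕ) (i : ZMod n) (c : ℕ) : Set (ℕ × ℕ) :=
  {p | p ∈ RemSet n f i ∧ p.2 < c}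

/-- Removable `i`-nodes not to the left of column `c`. -/
def RemSetR (n : ℕ) (f : ℕ → ℕ) (i : ZMod n) (c : ℕ) : Set (ℕ × ℕ) :=
  {p | p ∈ RemSet n f i ∧ c ≤ p.2}


section Helpers

variable {n : ℕ}

lemma addSet_addNode (hn : (1:ZMod n) ≠ 0) (f : ℕ → ℕ) (hf : Antitone f)
    (i : ZMod n) (a b : ℕ) (hb : f a = b) (hcond : a = 0 ∨ b < f (a-1))
    (hres : (b : ZMod n) - (a : ZMod n) = i) :
    AddSet n (addNode f (a,b)) i = AddSet n f i \ {(a,b)} := by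
  ext ⟨r, c⟩
  simp only [AddSet, Addable, addNode, Res, Set.mem_setOf_eq, Set.mem_diff,
    Set.mem_singleton_iff, Prod.mk.injEq, hb, Function.update_apply]
  by_cases hra : r = a
  · subst hra
    rw [if_pos rfl]
    constructor
    · rintro ⟨⟨h1, -⟩, h3⟩
      exfalso; apply hn
      subst h1
      push_cast at h3
      linear_combination h3 - hres
    · rintro ⟨⟨⟨h1, -⟩, -⟩, h4⟩
      exact absurd ⟨rfl, h1.trans hb⟩ h4
  · by_cases hra1 : r = a + 1
    · subst hra1
      rw [if_neg hra, show a + 1 - 1 = a by omega, if_pos rfl, hb]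
      constructor
      · rintro ⟨⟨h1, h2⟩, h3⟩
        have hcb : c ≠ b := by
          intro hcb; subst hcb
          apply hn
          push_cast at h3
          linear_combination hres - h3
        have hle : c ≤ b := by rw [h1, ← hb]; exact hf (Nat.le_succ a)
        exact ⟨⟨⟨h1, Or.inr (by omega)⟩, h3⟩, fun h => by omega⟩
      · rintro ⟨⟨⟨h1, h2⟩, h3⟩, -⟩
        refine ⟨⟨h1, Or.inr ?_⟩, h3⟩
        rcases h2 with h | h
        · omega
        · omega
    · have hr1 : r - 1 ≠ a := by omega
      rw [if_neg hra, if_neg hr1]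
      constructor
      · rintro h
        exact ⟨h, fun hh => hra hh.1⟩
      · rintro ⟨h, -⟩
        exact h

lemma remSet_addNode (hn : (1:ZMod n) ≠ 0) (f : ℕ → ℕ) (hf : Antitone f)
    (i : ZMod n) (a b : ℕ) (hb : f a = b) (hcond : a = 0 ∨ b < f (a-1))
    (hres : (b : ZMod n) - (a : ZMod n) = i) :
    RemSet n (addNode f (a,b)) i = insert (a,b) (RemSet n f i) := by
  ext ⟨r, c⟩
  simp only [RemSet, Removable, addNode, Res, Set.mem_setOf_eq, Set.mem_insert_iff,
    Prod.mk.injEq, hb, Function.update_apply]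
  by_cases hra : r = a
  · subst hra
    rw [if_pos rfl, if_neg (by omega : ¬ r + 1 = r)]
    constructor
    · rintro ⟨⟨h1, -⟩, -⟩
      exact Or.inl ⟨rfl, by omega⟩
    · rintro (⟨-, h1⟩ | ⟨⟨h1, -⟩, h3⟩)
      · subst h1
        exact ⟨⟨rfl, hb ▸ hf (Nat.le_succ r)⟩, hres⟩
      · exfalso; apply hn
        rw [hb] at h1
        have h1' : ((c : ZMod n) + 1) = (b : ZMod n) := by exact_mod_cast congrArg (fun k : ℕ => (k : ZMod n)) h1
        linear_combination h1' - h3 + hres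
  · by_cases hra1 : r + 1 = a
    · have ha0 : a ≠ 0 := by omega
      rcases hcond with h | hlt
      · omega
      rw [if_neg hra, if_pos hra1]
      have hfr : f r = f (a - 1) := by rw [show a - 1 = r by omega]
      have hfa : f (r + 1) = b := by rw [hra1, hb]
      constructor
      · rintro ⟨⟨h1, h2⟩, h3⟩
        exact Or.inr ⟨⟨h1, by omega⟩, h3⟩
      · rintro (⟨h1, -⟩ | ⟨⟨h1, h2⟩, h3⟩)
        · exact absurd h1 hra
        · have hcb : c ≠ b := by
            intro hcb; subst hcb
            apply hn
            have hr : ((r + 1 : ℕ) : ZMod n) = (a : ZMod n) := by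
              exact_mod_cast congrArg (fun k : ℕ => (k : ZMod n)) hra1
            push_cast at hr h3
            linear_combination h3 - hres + hr
          have hble : b ≤ c := by rw [← hfr] at hlt; omega
          exact ⟨⟨h1, by omega⟩, h3⟩
    · rw [if_neg hra, if_neg hra1]
      constructor
      · rintro h
        exact Or.inr h
      · rintro (⟨h1, -⟩ | h)
        · exact absurd h1 hra
        · exact h

end Helpers

section Fin

variable {n : ℕ}

lemma addSet_finite (f : ℕ → ℕ) (hf : Antitone f) (N : ℕ) (hN : ∀ m, N ≤ m → f m = 0)
    (i : ZMod n) : (AddSet n f i).Finite := by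
  apply Set.Finite.subset ((Set.finite_Iic N).prod (Set.finite_Iic (f 0)))
  rintro ⟨r, c⟩ ⟨⟨h1, h2⟩, -⟩
  have h1' : c = f r := h1
  have h2' : r = 0 ∨ c < f (r - 1) := h2
  simp only [Set.mem_prod, Set.mem_Iic]
  constructor
  · by_contra hr
    push_neg at hr
    rcases h2' with h | h
    · omega
    · rw [hN (r-1) (by omega)] at h; omega
  · have := hf (Nat.zero_le r); omega

lemma remSet_finite (f : ℕ → ℕ) (hf : Antitone f) (N : ℕ) (hN : ∀ m, N ≤ m → f m = 0)
    (i : ZMod n) : (RemSet n f i).Finite := by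
  apply Set.Finite.subset ((Set.finite_Iic N).prod (Set.finite_Iic (f 0)))
  rintro ⟨r, c⟩ ⟨⟨h1, h2⟩, -⟩
  have h1' : c + 1 = f r := h1
  simp only [Set.mem_prod, Set.mem_Iic]
  constructor
  · by_contra hr
    push_neg at hr
    rw [hN r (by omega)] at h1'; omega
  · have := hf (Nat.zero_le r); omega

end Fin

/-- Claim A, second identity:
`|I_i⁽ˡ⁾(λ-γ', λ)| - |I_i⁽ˡ⁾(λ+γ-γ', λ+γ)| = |R_i⁽ʳ⁾(λ, λ+γ)| - |R_i⁽ʳ⁾(λ-γ', λ-γ'+γ)|`. -/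
theorem claimA_second (n : ℕ) (hn : 2 ≤ n) (lam : ℕ → ℕ) (hlam : IsPartition lam)
    (i : ZMod n) (γ γ' : ℕ × ℕ) (hγ : Addable lam γ) (hγres : Res n γ = i)
    (hγ' : Removable lam γ') (hγ'res : Res n γ' = i) (hne : γ ≠ γ') :
    ((AddSetL n (removeNode lam γ') i γ'.2).ncard : ℤ) -
      ((AddSetL n (addNode (removeNode lam γ') γ) i γ'.2).ncard : ℤ) =
    ((RemSetR n lam i γ.2).ncard : ℤ) -
      ((RemSetR n (removeNode lam γ') i γ.2).ncard : ℤ) := by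
  obtain ⟨hanti, N, hN⟩ := hlam
  have hone : (1 : ZMod n) ≠ 0 := by
    haveI : Fact (1 < n) := ⟨hn⟩
    exact one_ne_zero
  obtain ⟨a, b⟩ := γ
  obtain ⟨a', b'⟩ := γ'
  have hb : b = lam a := hγ.1
  have hcond : a = 0 ∨ b < lam (a - 1) := hγ.2
  have hb' : b' + 1 = lam a' := hγ'.1
  have hb'2 : lam (a' + 1) ≤ b' := hγ'.2
  have hres : (b : ZMod n) - (a : ZMod n) = i := hγres
  have hres' : (b' : ZMod n) - (a' : ZMod n) = i := hγ'res
  -- rows are distinct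
  have hrow : a ≠ a' := by
    intro h; subst h
    apply hone
    have hbb : b = b' + 1 := by omega
    subst hbb
    push_cast at hres
    linear_combination hres - hres'
  -- columns are distinct
  have hcol : b ≠ b' := by
    intro h; subst h
    have haa : a' < a := by
      by_contra hc
      have := hanti (le_of_not_gt hc)
      omega
    have ha0 : a ≠ 0 := by omega
    have hlt : b < lam (a - 1) := by tauto
    have haa1 : a = a' + 1 := by
      by_contra hc
      have h1 : a' + 1 ≤ a - 1 := by omega
      have := hanti h1
      omega
    apply hone
    have hcast : ((a' + 1 : ℕ) : ZMod n) = (a : ZMod n) := by rw [← haa1]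
    push_cast at hcast
    linear_combination hres' - hres + hcast
  -- the modified partition μ = λ - γ'
  set μ := removeNode lam (a', b') with hμdef
  have hμval : ∀ m, μ m = if m = a' then b' else lam m := by
    intro m
    by_cases h : m = a' <;> simp [hμdef, removeNode, Function.update_apply, h] <;> omega
  have hμa : μ a = b := by rw [hμval, if_neg hrow]; omega
  have hμa' : μ a' = b' := by rw [hμval, if_pos rfl]
  have hμanti : Antitone μ := by
    intro r s hrs
    rw [hμval, hμval]
    by_cases hr : r = a'
    · rw [if_pos hr]
      by_cases hs : s = a'
      · rw [if_pos hs]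
      · rw [if_neg hs]
        have : lam s ≤ lam (a' + 1) := hanti (by omega)
        omega
    · rw [if_neg hr]
      by_cases hs : s = a'
      · rw [if_pos hs]
        have : lam a' ≤ lam r := hanti (by omega)
        omega
      · rw [if_neg hs]; exact hanti hrs
  have hμN : ∀ m, N ≤ m → μ m = 0 := by
    intro m hm
    rw [hμval]
    by_cases h : m = a'
    · exfalso
      have := hN m hm
      rw [h] at this
      omega
    · rw [if_neg h]; exact hN m hm
  -- γ is addable for μ
  have hγcondμ : a = 0 ∨ b < μ (a - 1) := by
    rcases hcond with h | h
    · exact Or.inl h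
    · right
      rw [hμval]
      by_cases h1 : a - 1 = a'
      · rw [if_pos h1]
        have ha0 : a ≠ 0 := by
          intro hc; subst hc; simp at h1; omega
        have haa1 : a = a' + 1 := by omega
        have hble : b ≤ b' := by
          have h2 : b < lam a' := h1 ▸ h
          omega
        have hbb : b ≠ b' := by
          intro hc; subst hc
          apply hone
          have hcast : ((a' + 1 : ℕ) : ZMod n) = (a : ZMod n) := by rw [← haa1]
          push_cast at hcast
          linear_combination hres' - hres + hcast
        omega
      · rw [if_neg h1]; exact h
  -- γ' is addable for μ, and adding it back gives λ
  have hγ'condμ : a' = 0 ∨ b' < μ (a' - 1) := by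
    by_cases h : a' = 0
    · exact Or.inl h
    · right
      rw [hμval, if_neg (by omega : ¬ a' - 1 = a')]
      have : lam a' ≤ lam (a' - 1) := hanti (by omega)
      omega
  have hlam_eq : addNode μ (a', b') = lam := by
    funext m
    by_cases h : m = a'
    · subst h
      simp only [addNode, Function.update_self]
      omega
    · simp only [addNode]
      rw [Function.update_of_ne h, hμval, if_neg h]
  -- the two key set identities
  have E1 : AddSet n (addNode μ (a, b)) i = AddSet n μ i \ {(a, b)} :=
    addSet_addNode hone μ hμanti i a b hμa hγcondμ hres
  have E2 : RemSet n lam i = insert (a', b') (RemSet n μ i) := by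
    rw [← hlam_eq]
    exact remSet_addNode hone μ hμanti i a' b' hμa' hγ'condμ hres'
  have hγ'notμ : (a', b') ∉ RemSet n μ i := by
    rintro ⟨h1, -⟩
    have : b' + 1 = μ a' := h1.1
    omega
  have hγinAdd : (a, b) ∈ AddSet n μ i := ⟨⟨hμa.symm, hγcondμ⟩, hres⟩
  -- finiteness
  have hSfin : (AddSetL n μ i b').Finite :=
    (addSet_finite μ hμanti N hμN i).subset (fun p hp => hp.1)
  have hTfin : (RemSetR n μ i b).Finite :=
    (remSet_finite μ hμanti N hμN i).subset (fun p hp => hp.1)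
  -- AddSetL identity
  have L2 : AddSetL n (addNode μ (a, b)) i b' = AddSetL n μ i b' \ {(a, b)} := by
    ext p
    simp only [AddSetL, Set.mem_setOf_eq, E1, Set.mem_diff, Set.mem_singleton_iff]
    tauto
  rcases Nat.lt_or_ge b b' with hbb | hbb
  · -- case b < b' : both sides are 1
    have hγinL : (a, b) ∈ AddSetL n μ i b' := ⟨hγinAdd, hbb⟩
    have hL : (AddSetL n μ i b' \ {(a, b)}).ncard + 1 = (AddSetL n μ i b').ncard :=
      Set.ncard_diff_singleton_add_one hγinL hSfin
    have R2 : RemSetR n lam i b = insert (a', b') (RemSetR n μ i b) := by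
      ext p
      simp only [RemSetR, Set.mem_setOf_eq, E2, Set.mem_insert_iff]
      constructor
      · rintro ⟨h | h, h2⟩
        · exact Or.inl h
        · exact Or.inr ⟨h, h2⟩
      · rintro (h | ⟨h1, h2⟩)
        · subst h
          exact ⟨Or.inl rfl, by omega⟩
        · exact ⟨Or.inr h1, h2⟩
    have hγ'notT : (a', b') ∉ RemSetR n μ i b := fun h => hγ'notμ h.1
    have hR : (insert (a', b') (RemSetR n μ i b)).ncard = (RemSetR n μ i b).ncard + 1 :=
      Set.ncard_insert_of_notMem hγ'notT hTfin
    rw [L2, R2, hR]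
    push_cast [← hL]
    ring
  · -- case b' ≤ b (hence b' < b) : both sides are 0
    have hbb' : b' < b := by omega
    have hγnotL : (a, b) ∉ AddSetL n μ i b' := fun h => by
      have := h.2; omega
    have hL : AddSetL n μ i b' \ {(a, b)} = AddSetL n μ i b' :=
      Set.diff_singleton_eq_self hγnotL
    have R2 : RemSetR n lam i b = RemSetR n μ i b := by
      ext p
      simp only [RemSetR, Set.mem_setOf_eq, E2, Set.mem_insert_iff]
      constructor
      · rintro ⟨h | h, h2⟩
        · subst h
          exact absurd h2 (by omega)
        · exact ⟨h, h2⟩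
      · rintro ⟨h1, h2⟩
        exact ⟨Or.inr h1, h2⟩
    rw [L2, hL, R2]
    ring
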